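/- arXiv:1112.4970 — 5 statements merged into one kernel-verified Lean document; each statement's English description precedes it below -/
import Mathlib

section
/- Exchange Lemma for k = 3: let n, p_1, p_2, p_3 be positive integers and let {a,b,c} = {1,2,3}. Then N_{{a,b}×∅} = N_{{a}×{b}} − N_{{a,c}×{b}} + N_{{a,b}×{a,c}}. -/
open Finset

/-- A `(p 0, …, p (k-1))`-colored factorization of the cycle `(1,2,…,n)` (encoded as
`finRotate n` on `Fin n`): permutations `π t` whose product (in order) is the long cycle,
together with surjective colorings `φ t : Fin n → Fin (p t)` constant on cycles of `π t`. -/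
def IsColoredFact {n k : ℕ} (p : Fin k → ℕ)
    (x : (Fin k → Equiv.Perm (Fin n)) × ((t : Fin k) → Fin n → Fin (p t))) : Prop :=
  (List.ofFn x.1).prod = finRotate n ∧
  (∀ t, Function.Surjective (x.2 t)) ∧
  ∀ t a b, (x.1 t).SameCycle a b → x.2 t a = x.2 t b

/-- `C^n_{p_1,…,p_k}`: the number of colored factorizations. -/
noncomputable def Ccard (n k : ℕ) (p : Fin k → ℕ) : ℕ :=
  Nat.card {x : (Fin k → Equiv.Perm (Fin n)) × ((t : Fin k) → Fin n → Fin (p t)) //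
    IsColoredFact p x}

/-- Membership in `M^n_{p_1,…,p_k}`: a tuple of strict subsets of `Fin k` such that each
`t` lies in exactly `p t` of the subsets. -/
def InM {k n : ℕ} (p : Fin k → ℕ) (R : Fin n → Finset (Fin k)) : Prop :=
  (∀ i, R i ≠ Finset.univ) ∧ ∀ t, (Finset.univ.filter fun i => t ∈ R i).card = p t

/-- `M^m_{p_1,…,p_k}`: the number of such tuples. -/
noncomputable def Mcard (k m : ℕ) (p : Fin k → ℕ) : ℕ :=
  Nat.card {R : Fin m → Finset (Fin k) // InM p R}

open Fin.NatCast in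
/-- The map `α(t,R)` (vertices of `[k]` are `0`-indexed as `Fin k`): `α(t,R) = t-1` if
`t ∈ R`, and `α(t,R) = t+r` where `r ≥ 0` is largest with `t+1,…,t+r ∈ R` otherwise. -/
def alpha {k : ℕ} [NeZero k] (t : Fin k) (R : Finset (Fin k)) : Fin k :=
  if t ∈ R then t - 1
  else t + ((Nat.findGreatest (fun r => ∀ s ∈ Finset.Icc 1 r, t + (s : Fin k) ∈ R) (k - 1) : ℕ) : Fin k)

/-- The edges `e_t = {t, α(t, R_{i_t})}`, `t` ranging over the first `k-1` vertices. -/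
def treeEdges {k n : ℕ} [NeZero k] (idx : Fin (k - 1) → Fin n) (R : Fin n → Finset (Fin k))
    (t : Fin (k - 1)) : Sym2 (Fin k) :=
  s(Fin.castLE (Nat.sub_le k 1) t, alpha (Fin.castLE (Nat.sub_le k 1) t) (R (idx t)))

/-- The graph `α((i_1,…,i_{k-1}), (R_1,…,R_n))` is a tree: its `k-1` edges are loopless,
pairwise distinct (as unordered pairs) and the resulting graph on `Fin k` is connected. -/
def IsTreeGraph {k n : ℕ} [NeZero k] (idx : Fin (k - 1) → Fin n)
    (R : Fin n → Finset (Fin k)) : Prop :=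
  (∀ t : Fin (k - 1), Fin.castLE (Nat.sub_le k 1) t ≠ alpha (Fin.castLE (Nat.sub_le k 1) t) (R (idx t))) ∧
  Function.Injective (treeEdges idx R) ∧
  (SimpleGraph.fromEdgeSet (Set.range (treeEdges idx R))).Connected

/-- The number of cycles (including fixed points) of a permutation. -/
def cycleCount {n : ℕ} (π : Equiv.Perm (Fin n)) : ℕ :=
  π.cycleType.card + (Finset.univ.filter fun a => π a = a).card

/-- Colored factorizations with prescribed color-compositions `γ`. -/
noncomputable def cColoredCard (n k : ℕ) (p : Fin k → ℕ) (γ : (t : Fin k) → Fin (p t) → ℕ) : ℕ :=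
  Nat.card {x : (Fin k → Equiv.Perm (Fin n)) × ((t : Fin k) → Fin n → Fin (p t)) //
    IsColoredFact p x ∧ ∀ t i, (Finset.univ.filter fun a => x.2 t a = i).card = γ t i}

/-- `N_{A×B}`: number of triples `(i,j,R)` with `R ∈ M^n_{p_1,p_2,p_3}`, `A ⊆ R i`, `B ⊆ R j`. -/
noncomputable def Ncard (n : ℕ) (p : Fin 3 → ℕ) (A B : Finset (Fin 3)) : ℕ :=
  Nat.card {x : Fin n × Fin n × (Fin n → Finset (Fin 3)) //
    InM p x.2.2 ∧ A ⊆ x.2.2 x.1 ∧ B ⊆ x.2.2 x.2.1}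

/-!
The sets `R i`, `R j` are strict subsets of `{a, b, c}`. So `N_{{a}×{b}} - N_{{a,c}×{b}}` counts
the triples with `a ∈ R i`, `c ∉ R i`, `b ∈ R j`, and `N_{{a,b}×∅} - N_{{a,b}×{a,c}}` those with
`{a, b} ⊆ R i`, `{a, c} ⊈ R j`. Both contain the triples with `{a, b} ⊆ R i`, `b ∈ R j`; on the
rest, moving `b` from `R j` into `R i` is a bijection between the two families: it preserves every
`p t`, and the side conditions `c ∉ R i` and `{a, c} ⊈ R j` say exactly that the sets stay strict.
-/

section Transfer

variable {k n : ℕ}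

def transfer (b : Fin k) (i j : Fin n) (R : Fin n → Finset (Fin k)) : Fin n → Finset (Fin k) :=
  Function.update (Function.update R j ((R j).erase b)) i (insert b (R i))

variable {b : Fin k} {i j : Fin n} {R : Fin n → Finset (Fin k)}

lemma transfer_apply_left : transfer b i j R i = insert b (R i) := by
  simp [transfer]

lemma transfer_apply_right (hij : i ≠ j) : transfer b i j R j = (R j).erase b := by
  simp [transfer, hij.symm]

lemma transfer_apply_of_ne {x : Fin n} (hi : x ≠ i) (hj : x ≠ j) : transfer b i j R x = R x := by
  simp [transfer, hi, hj]

lemma mem_transfer_of_ne {t : Fin k} (htb : t ≠ b) (x : Fin n) :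
    t ∈ transfer b i j R x ↔ t ∈ R x := by
  simp only [transfer, Function.update_apply]
  split_ifs <;> subst_vars <;> simp [htb]

lemma transfer_transfer (hbi : b ∉ R i) (hbj : b ∈ R j) :
    transfer b j i (transfer b i j R) = R := by
  have hij : i ≠ j := fun h => hbi (h ▸ hbj)
  funext x
  rcases eq_or_ne x i with rfl | hxi
  · rw [transfer_apply_right hij.symm, transfer_apply_left, erase_insert hbi]
  rcases eq_or_ne x j with rfl | hxj
  · rw [transfer_apply_left, transfer_apply_right hij, insert_erase hbj]
  · rw [transfer_apply_of_ne hxj hxi, transfer_apply_of_ne hxi hxj]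

lemma InM.transfer {p : Fin k → ℕ} (hR : InM p R) (hbi : b ∉ R i) (hbj : b ∈ R j)
    (hins : insert b (R i) ≠ univ) : InM p (transfer b i j R) := by
  have hij : i ≠ j := fun h => hbi (h ▸ hbj)
  refine ⟨fun x => ?_, fun t => ?_⟩
  · rcases eq_or_ne x i with rfl | hxi
    · rwa [transfer_apply_left]
    rcases eq_or_ne x j with rfl | hxj
    · rw [transfer_apply_right hij]
      exact fun h => notMem_erase b (R x) (h ▸ mem_univ b)
    · rw [transfer_apply_of_ne hxi hxj]
      exact hR.1 x
  rw [← hR.2 t]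
  rcases eq_or_ne t b with rfl | htb
  · -- `swap i j` carries the holders of `t` in the new tuple onto those in `R`
    refine card_equiv (Equiv.swap i j) fun x => ?_
    simp only [mem_filter, mem_univ, true_and]
    rcases eq_or_ne x i with rfl | hxi
    · simp [transfer_apply_left, hbj]
    rcases eq_or_ne x j with rfl | hxj
    · simp [transfer_apply_right hij, hbi]
    · rw [transfer_apply_of_ne hxi hxj, Equiv.swap_apply_of_ne_of_ne hxi hxj]
  · simp only [mem_transfer_of_ne htb]

end Transfer

section TripleCount

variable (n : ℕ) {k : ℕ} (p : Fin k → ℕ)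

open Classical in
noncomputable def tripleCount (P : Finset (Fin k) → Finset (Fin k) → Prop) : ℕ :=
  #{x : Fin n × Fin n × (Fin n → Finset (Fin k)) | InM p x.2.2 ∧ P (x.2.2 x.1) (x.2.2 x.2.1)}

variable {n p}

lemma tripleCount_eq_add {P Q R : Finset (Fin k) → Finset (Fin k) → Prop}
    (h : ∀ S T, S ≠ univ → T ≠ univ → (P S T ↔ Q S T ∨ R S T) ∧ ¬(Q S T ∧ R S T)) :
    tripleCount n p P = tripleCount n p Q + tripleCount n p R := by
  classical
  simp only [tripleCount]
  rw [← card_union_of_disjoint, ← filter_or]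
  · refine congrArg card (filter_congr fun x _ => ?_)
    have := fun hR : InM p x.2.2 => h _ _ (hR.1 x.1) (hR.1 x.2.1)
    tauto
  · refine disjoint_filter.2 fun x _ hQ hR => ?_
    exact (h _ _ (hQ.1.1 x.1) (hQ.1.1 x.2.1)).2 ⟨hQ.2, hR.2⟩

lemma tripleCount_eq_add_add {P Q₁ Q₂ Q₃ : Finset (Fin k) → Finset (Fin k) → Prop}
    (h : ∀ S T, S ≠ univ → T ≠ univ → (P S T ↔ Q₁ S T ∨ Q₂ S T ∨ Q₃ S T) ∧
      ¬(Q₁ S T ∧ Q₂ S T) ∧ ¬(Q₁ S T ∧ Q₃ S T) ∧ ¬(Q₂ S T ∧ Q₃ S T)) :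
    tripleCount n p P = tripleCount n p Q₁ + tripleCount n p Q₂ + tripleCount n p Q₃ := by
  rw [tripleCount_eq_add (Q := Q₁) (R := fun S T => Q₂ S T ∨ Q₃ S T), add_assoc,
    tripleCount_eq_add (P := fun S T => Q₂ S T ∨ Q₃ S T) (Q := Q₂) (R := Q₃)]
  all_goals
    intro S T hS hT
    have := h S T hS hT
    tauto

lemma tripleCount_transfer (b : Fin k) (Φ : Finset (Fin k) → Finset (Fin k) → Prop) :
    tripleCount n p (fun S T => b ∉ S ∧ b ∈ T ∧ insert b S ≠ univ ∧ Φ (insert b S) (T.erase b)) =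
      tripleCount n p (fun S T => b ∈ S ∧ b ∉ T ∧ insert b T ≠ univ ∧ Φ S T) := by
  classical
  simp only [tripleCount]
  refine card_nbij' (fun x => (x.1, x.2.1, transfer b x.1 x.2.1 x.2.2))
    (fun x => (x.1, x.2.1, transfer b x.2.1 x.1 x.2.2)) ?_ ?_ ?_ ?_
  · rintro ⟨i, j, R⟩ hx
    simp only [coe_filter, mem_univ, true_and, Set.mem_ofPred_eq] at hx ⊢
    obtain ⟨hR, hbi, hbj, hins, hΦ⟩ := hx
    have hij : i ≠ j := fun h => hbi (h ▸ hbj)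
    refine ⟨hR.transfer hbi hbj hins, ?_⟩
    rw [transfer_apply_left, transfer_apply_right hij, insert_erase hbj]
    exact ⟨mem_insert_self b _, notMem_erase b _, hR.1 j, hΦ⟩
  · rintro ⟨i, j, R⟩ hx
    simp only [coe_filter, mem_univ, true_and, Set.mem_ofPred_eq] at hx ⊢
    obtain ⟨hR, hbi, hbj, hins, hΦ⟩ := hx
    have hji : j ≠ i := fun h => hbj (h ▸ hbi)
    refine ⟨hR.transfer hbj hbi hins, ?_⟩
    rw [transfer_apply_left, transfer_apply_right hji, insert_erase hbi, erase_insert hbj]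
    exact ⟨notMem_erase b _, mem_insert_self b _, hR.1 i, hΦ⟩
  · rintro ⟨i, j, R⟩ hx
    simp only [coe_filter, mem_univ, true_and, Set.mem_ofPred_eq] at hx
    obtain ⟨-, hbi, hbj, -⟩ := hx
    simp only [transfer_transfer hbi hbj]
  · rintro ⟨i, j, R⟩ hx
    simp only [coe_filter, mem_univ, true_and, Set.mem_ofPred_eq] at hx
    obtain ⟨-, hbi, hbj, -⟩ := hx
    simp only [transfer_transfer hbj hbi]

end TripleCount

section Exchange

variable (n : ℕ) (p : Fin 3 → ℕ)

lemma Ncard_eq_tripleCount (A B : Finset (Fin 3)) :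
    Ncard n p A B = tripleCount n p fun S T => A ⊆ S ∧ B ⊆ T := by
  classical
  rw [Ncard, tripleCount, Nat.card_eq_fintype_card, Fintype.card_subtype]
  convert rfl

variable {a b c : Fin 3}

lemma ne_of_triple_eq_univ (habc : ({a, b, c} : Finset (Fin 3)) = univ) :
    a ≠ b ∧ b ≠ c ∧ a ≠ c := by
  revert a b c
  decide

lemma eq_univ_iff_of_triple (habc : ({a, b, c} : Finset (Fin 3)) = univ) (S : Finset (Fin 3)) :
    S = univ ↔ a ∈ S ∧ b ∈ S ∧ c ∈ S := by
  rw [← univ_subset_iff, ← habc, insert_subset_iff, insert_subset_iff, singleton_subset_iff]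

lemma Ncard_singleton_singleton (habc : ({a, b, c} : Finset (Fin 3)) = univ) :
    Ncard n p {a} {b} = Ncard n p {a, c} {b} +
      tripleCount n p (fun S T => a ∈ S ∧ b ∈ S ∧ b ∈ T) +
      tripleCount n p (fun S T => b ∉ S ∧ b ∈ T ∧ insert b S ≠ univ ∧ a ∈ insert b S) := by
  obtain ⟨hab, hbc, -⟩ := ne_of_triple_eq_univ habc
  rw [Ncard_eq_tripleCount, Ncard_eq_tripleCount]
  refine tripleCount_eq_add_add fun S T hS hT => ?_
  simp only [Ne, eq_univ_iff_of_triple habc, mem_insert, insert_subset_iff, singleton_subset_iff,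
    hab, hbc.symm, true_or, false_or, true_and] at *
  grind

lemma Ncard_pair_empty (habc : ({a, b, c} : Finset (Fin 3)) = univ) :
    Ncard n p {a, b} ∅ = Ncard n p {a, b} {a, c} +
      tripleCount n p (fun S T => a ∈ S ∧ b ∈ S ∧ b ∈ T) +
      tripleCount n p (fun S T => b ∈ S ∧ b ∉ T ∧ insert b T ≠ univ ∧ a ∈ S) := by
  obtain ⟨hab, hbc, -⟩ := ne_of_triple_eq_univ habc
  rw [Ncard_eq_tripleCount, Ncard_eq_tripleCount]
  refine tripleCount_eq_add_add fun S T hS hT => ?_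
  simp only [Ne, eq_univ_iff_of_triple habc, mem_insert, insert_subset_iff, singleton_subset_iff,
    empty_subset, hab, hbc.symm, true_or, false_or, true_and, and_true] at *
  grind

end Exchange

theorem exchange_lemma_k3_general (n : ℕ) (p : Fin 3 → ℕ)
    (a b c : Fin 3) (habc : ({a, b, c} : Finset (Fin 3)) = Finset.univ) :
    (Ncard n p {a, b} ∅ : ℤ) =
      Ncard n p {a} {b} - Ncard n p {a, c} {b} + Ncard n p {a, b} {a, c} := by
  have hleft := Ncard_singleton_singleton n p habc
  have hright := Ncard_pair_empty n p habc
  have htransfer := tripleCount_transfer (n := n) (p := p) b fun S _ => a ∈ S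
  omega

theorem exchange_lemma_k3 (n : ℕ) (hn : 0 < n) (p : Fin 3 → ℕ) (hp : ∀ t, 0 < p t)
    (a b c : Fin 3) (habc : ({a, b, c} : Finset (Fin 3)) = Finset.univ) :
    (Ncard n p {a, b} ∅ : ℤ) =
      Ncard n p {a} {b} - Ncard n p {a, c} {b} + Ncard n p {a, b} {a, c} :=
  exchange_lemma_k3_general n p a b c habc
end

section
/- Inclusion–exclusion for spanning trees when k = 3: for all positive integers n, p_1, p_2, p_3, the number of triples ((i,j),(R_1,…,R_n)) with i,j ∈ [n] and (R_1,…,R_n) ∈ M^n_{p_1,p_2,p_3} such that the graph α((i,j),(R_1,…,R_n)) is a tree equals N_{{1}×{2}} + N_{{1}×{3}} + N_{{2}×{3}} − N_{{1}×{2,3}} − N_{{2}×{1,3}} − N_{{3}×{1,2}} + N_{{1,2}×{1,3}} + N_{{1,2}×{2,3}} + N_{{1,3}×{2,3}}. -/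
open Finset

/-!
Each side is a sum `∑_{i,j} ∑_{R ∈ M^n_p} w (R i) (R j)` for a weight `w` on pairs of strict
subsets of `Fin 3`: the indicator of "two distinct loopless edges" for the tree count (on three
vertices two distinct edges are automatically connected), and the indicator of `A ⊆ X ∧ B ⊆ Y`
for `N_{A×B}`. The difference of the two weights is antisymmetric on strict subsets, a finite check
over `7 × 7` pairs, so its sum vanishes after exchanging `i` and `j`.
-/

lemma Finset.sum_sum_eq_zero_of_antisymm {ι G : Type*} [Fintype ι] [AddCommGroup G]
    [IsAddTorsionFree G] (f : ι → ι → G) (hf : ∀ i j, f i j = -f j i) :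
    ∑ i, ∑ j, f i j = 0 :=
  self_eq_neg.mp <| by
    conv_rhs => rw [Finset.sum_comm, ← Finset.sum_neg_distrib]
    simp only [← Finset.sum_neg_distrib, ← hf]

lemma SimpleGraph.connected_of_adj_zero_of_adj_one {G : SimpleGraph (Fin 3)} {a b : Fin 3}
    (ha : G.Adj 0 a) (hb : G.Adj 1 b) (hab : s(0, a) ≠ s(1, b)) : G.Connected := by
  have hcases : ∀ a b : Fin 3, a ≠ 0 → b ≠ 1 → s(0, a) ≠ s(1, b) →
      a = 1 ∧ b = 2 ∨ a = 2 ∧ b = 0 ∨ a = 2 ∧ b = 2 := by decide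
  rw [connected_iff_exists_forall_reachable]
  refine ⟨0, fun v => ?_⟩
  rcases hcases a b ha.ne' hb.ne' hab with ⟨rfl, rfl⟩ | ⟨rfl, rfl⟩ | ⟨rfl, rfl⟩ <;>
    fin_cases v
  all_goals first
    | rfl
    | exact ha.reachable
    | exact ha.reachable.trans hb.reachable
    | exact hb.reachable.symm
    | exact ha.reachable.trans hb.reachable.symm

def IsTreePair (A B : Finset (Fin 3)) : Prop :=
  0 ≠ alpha 0 A ∧ 1 ≠ alpha 1 B ∧ s(0, alpha 0 A) ≠ s(1, alpha 1 B)

instance : DecidableRel IsTreePair := fun A B => by unfold IsTreePair; infer_instance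

lemma isTreeGraph_iff_isTreePair {n : ℕ} (i j : Fin n) (R : Fin n → Finset (Fin 3)) :
    IsTreeGraph ![i, j] R ↔ IsTreePair (R i) (R j) := by
  constructor
  · rintro ⟨hloop, hinj, -⟩
    exact ⟨hloop 0, hloop 1, fun h => absurd (hinj (a₁ := 0) (a₂ := 1) h) (by decide)⟩
  · rintro ⟨h₀, h₁, hne⟩
    set G := SimpleGraph.fromEdgeSet (Set.range (treeEdges ![i, j] R))
    have hadj₀ : G.Adj 0 (alpha 0 (R i)) :=
      SimpleGraph.fromEdgeSet_adj _ |>.mpr ⟨⟨0, rfl⟩, h₀⟩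
    have hadj₁ : G.Adj 1 (alpha 1 (R j)) :=
      SimpleGraph.fromEdgeSet_adj _ |>.mpr ⟨⟨1, rfl⟩, h₁⟩
    refine ⟨fun t => ?_, fun t u htu => ?_,
      SimpleGraph.connected_of_adj_zero_of_adj_one hadj₀ hadj₁ hne⟩
    · fin_cases t
      exacts [h₀, h₁]
    · fin_cases t <;> fin_cases u
      exacts [rfl, absurd htu hne, absurd htu.symm hne, rfl]

instance {k n : ℕ} (p : Fin k → ℕ) : DecidablePred (InM (n := n) p) := fun R => by
  unfold InM; infer_instance

def pairCount {k : ℕ} (n : ℕ) (p : Fin k → ℕ) :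
    (Finset (Fin k) → Finset (Fin k) → ℤ) →+ ℤ where
  toFun w := ∑ i : Fin n, ∑ j : Fin n, ∑ R with InM p R, w (R i) (R j)
  map_zero' := by simp
  map_add' w w' := by simp only [Pi.add_apply, Finset.sum_add_distrib]

lemma natCast_card_eq_pairCount {k n : ℕ} (p : Fin k → ℕ)
    (Q : Finset (Fin k) → Finset (Fin k) → Prop) [DecidableRel Q] :
    (Nat.card {x : Fin n × Fin n × (Fin n → Finset (Fin k)) //
        InM p x.2.2 ∧ Q (x.2.2 x.1) (x.2.2 x.2.1)} : ℤ) =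
      pairCount n p (fun A B => if Q A B then 1 else 0) := by
  rw [Nat.card_eq_fintype_card, Fintype.card_subtype, Finset.natCast_card_filter]
  simp only [pairCount, AddMonoidHom.coe_mk, ZeroHom.coe_mk, Fintype.sum_prod_type,
    Finset.sum_filter, ite_and]

lemma pairCount_eq_zero_of_antisymm {k : ℕ} (n : ℕ) (p : Fin k → ℕ)
    {w : Finset (Fin k) → Finset (Fin k) → ℤ}
    (hw : ∀ A B, A ≠ univ → B ≠ univ → w A B = -w B A) : pairCount n p w = 0 := by
  refine Finset.sum_sum_eq_zero_of_antisymm (fun i j => ∑ R with InM p R, w (R i) (R j))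
    fun i j => ?_
  rw [← Finset.sum_neg_distrib]
  exact sum_congr rfl fun R hR => hw _ _ ((mem_filter.1 hR).2.1 i) ((mem_filter.1 hR).2.1 j)

def subsetWeight {k : ℕ} (A B : Finset (Fin k)) (X Y : Finset (Fin k)) : ℤ :=
  if A ⊆ X ∧ B ⊆ Y then 1 else 0

def treeWeight (X Y : Finset (Fin 3)) : ℤ :=
  if IsTreePair X Y then 1 else 0

def inclExclWeight : Finset (Fin 3) → Finset (Fin 3) → ℤ :=
  subsetWeight {0} {1} + subsetWeight {0} {2} + subsetWeight {1} {2}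
    - subsetWeight {0} {1, 2} - subsetWeight {1} {0, 2} - subsetWeight {2} {0, 1}
    + subsetWeight {0, 1} {0, 2} + subsetWeight {0, 1} {1, 2} + subsetWeight {0, 2} {1, 2}

lemma treeWeight_sub_inclExclWeight_antisymm (A B : Finset (Fin 3)) (hA : A ≠ univ)
    (hB : B ≠ univ) :
    (treeWeight - inclExclWeight) A B = -(treeWeight - inclExclWeight) B A := by
  revert A B; decide

theorem inclusion_exclusion_k3_general (n : ℕ) (p : Fin 3 → ℕ) :
    (Nat.card {x : Fin n × Fin n × (Fin n → Finset (Fin 3)) //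
        InM p x.2.2 ∧ IsTreeGraph ![x.1, x.2.1] x.2.2} : ℤ) =
      Ncard n p {0} {1} + Ncard n p {0} {2} + Ncard n p {1} {2}
      - Ncard n p {0} {1, 2} - Ncard n p {1} {0, 2} - Ncard n p {2} {0, 1}
      + Ncard n p {0, 1} {0, 2} + Ncard n p {0, 1} {1, 2} + Ncard n p {0, 2} {1, 2} := by
  have hNcard (A B : Finset (Fin 3)) : (Ncard n p A B : ℤ) = pairCount n p (subsetWeight A B) :=
    natCast_card_eq_pairCount p (fun X Y => A ⊆ X ∧ B ⊆ Y)
  have hzero := pairCount_eq_zero_of_antisymm n p treeWeight_sub_inclExclWeight_antisymm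
  simp only [map_sub, map_add, inclExclWeight] at hzero
  simp only [isTreeGraph_iff_isTreePair, hNcard]
  rw [natCast_card_eq_pairCount p IsTreePair]
  exact eq_of_sub_eq_zero hzero

theorem inclusion_exclusion_k3 (n : ℕ) (hn : 0 < n) (p : Fin 3 → ℕ) (hp : ∀ t, 0 < p t) :
    (Nat.card {x : Fin n × Fin n × (Fin n → Finset (Fin 3)) //
        InM p x.2.2 ∧ IsTreeGraph ![x.1, x.2.1] x.2.2} : ℤ) =
      Ncard n p {0} {1} + Ncard n p {0} {2} + Ncard n p {1} {2}
      - Ncard n p {0} {1, 2} - Ncard n p {1} {0, 2} - Ncard n p {2} {0, 1}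
      + Ncard n p {0, 1} {0, 2} + Ncard n p {0, 1} {1, 2} + Ncard n p {0, 2} {1, 2} :=
  inclusion_exclusion_k3_general n p
end

section
/- Base case of Jackson's formula: for all integers k ≥ 2, n ≥ 1 and positive integers p_2,…,p_k, the number of (1,p_2,…,p_k)-colored factorizations of the cycle (1,2,…,n) satisfies C^n_{1,p_2,…,p_k} = (n!)^{k−1} · ∏_{t=2}^k binom(n−1, p_t−1). -/
open Finset

/-!
Because `p 0 = 1`, the first coloring is constant and places no condition on `π 0`, which is
then determined by the others through `π 0 = c * (π 1 ⋯ π (k-1))⁻¹`, `c` the long cycle. So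
the count splits into a product over `t ≠ 0` of the numbers of permutations of `Fin n` with a
surjective `p t`-coloring constant on their cycles. Composing with `Tuple.sort` of the coloring
turns such a pair into a pair (arbitrary permutation, monotone surjection `Fin n → Fin (p t)`),
and a monotone surjection is its multiset of values, which contains every color; removing one
copy of each color leaves a multiset of size `n - p t`, counted by stars and bars.
-/

section JacksonBaseCase

open Function Equiv

theorem Equiv.Perm.forall_sameCycle_imp_eq_iff {α β : Type*} [Finite α] (π : Perm α)
    (φ : α → β) : (∀ a b, π.SameCycle a b → φ a = φ b) ↔ φ ∘ π = φ := by
  refine ⟨fun h => funext fun a => (h a (π a) ⟨1, by simp⟩).symm, fun h a b hab => ?_⟩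
  obtain ⟨i, -, rfl⟩ := hab.exists_nat_pow_eq
  have hsemi : Semiconj φ π id := fun a => congrFun h a
  simpa [Perm.coe_pow] using (hsemi.iterate_right i a).symm

theorem Sym.card_forall_mem {α : Type*} [Fintype α] [DecidableEq α] {n : ℕ}
    (h : Fintype.card α ≤ n) :
    Nat.card {s : Sym α n // ∀ a, a ∈ s} =
      (Fintype.card α).multichoose (n - Fintype.card α) := by
  have hle : ∀ s : Sym α n, (∀ a, a ∈ s) ↔ (univ : Finset α).val ≤ s.1 := fun s => by
    rw [Multiset.le_iff_subset univ.nodup]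
    simp [Multiset.subset_iff, Sym.mem_coe]
  rw [← Sym.card_sym_eq_multichoose, ← Nat.card_eq_fintype_card]
  refine (Nat.card_eq_of_bijective (fun t : Sym α (n - Fintype.card α) =>
    (⟨⟨t.1 + univ.val, ?_⟩, (hle _).2 ?_⟩ : {s : Sym α n // ∀ a, a ∈ s})) ⟨?_, ?_⟩).symm
  · simp [h]
  · exact Multiset.le_add_left _ _
  · intro t u htu
    exact Sym.coe_injective (add_right_cancel (congrArg (fun s => s.1.1) htu))
  · rintro ⟨s, hs⟩
    refine ⟨⟨s.1 - univ.val, by rw [Multiset.card_sub ((hle s).1 hs)]; simp⟩, ?_⟩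
    exact Subtype.ext (Sym.coe_injective (tsub_add_cancel_of_le ((hle s).1 hs)))

theorem card_monotone_surjective_eq_card_sym {α : Type*} [LinearOrder α] (n : ℕ) :
    Nat.card {f : Fin n → α // Monotone f ∧ Surjective f} =
      Nat.card {s : Sym α n // ∀ a, a ∈ s} := by
  refine Nat.card_eq_of_bijective (fun f => ⟨⟨List.ofFn f.1, by simp⟩, fun a => ?_⟩) ⟨?_, ?_⟩
  · obtain ⟨i, rfl⟩ := f.2.2 a
    exact Multiset.mem_coe.2 (List.mem_ofFn.2 ⟨i, rfl⟩)
  · rintro ⟨f, hf, _⟩ ⟨g, hg, _⟩ hfg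
    have hperm : (List.ofFn f).Perm (List.ofFn g) :=
      Multiset.coe_eq_coe.1 (congrArg (fun s : {s : Sym α n // ∀ a, a ∈ s} => s.1.1) hfg)
    exact Subtype.ext
      (List.ofFn_injective (hperm.eq_of_sortedLE hf.sortedLE_ofFn hg.sortedLE_ofFn))
  · rintro ⟨s, hs⟩
    set l := s.1.sort (· ≤ ·)
    have hl : l.length = n := by rw [Multiset.length_sort]; exact s.2
    have hsorted : l.SortedLE := List.sortedLE_iff_pairwise.2 (Multiset.pairwise_sort _ _)
    have hofFn : List.ofFn (fun i : Fin n => l.get (i.cast hl.symm)) = l :=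
      (List.ofFn_congr hl l.get).symm.trans (List.ofFn_get l)
    refine ⟨⟨fun i => l.get (i.cast hl.symm), fun i j hij => hsorted hij, fun a => ?_⟩, ?_⟩
    · have ha : a ∈ l := (Multiset.mem_sort _).2 (hs a)
      rwa [← hofFn, List.mem_ofFn] at ha
    · apply Subtype.ext
      apply Sym.coe_injective
      simp only [hofFn]
      exact Multiset.sort_eq _ _

theorem card_monotone_surjective (m q : ℕ) :
    Nat.card {f : Fin (m + 1) → Fin (q + 1) // Monotone f ∧ Surjective f} = m.choose q := by
  rcases le_or_gt q m with hqm | hmq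
  · rw [card_monotone_surjective_eq_card_sym, Sym.card_forall_mem (by simpa using hqm),
      Fintype.card_fin, Nat.multichoose_eq, ← Nat.choose_symm hqm]
    congr 1 <;> omega
  · rw [Nat.choose_eq_zero_of_lt hmq, Nat.card_eq_zero]
    refine Or.inl ⟨fun f => ?_⟩
    have := Fintype.card_le_of_surjective _ f.2.2
    simp only [Fintype.card_fin] at this
    omega

abbrev ColoredPerm (n p : ℕ) :=
  {x : Perm (Fin n) × (Fin n → Fin p) // Surjective x.2 ∧ x.2 ∘ x.1 = x.2}

theorem Tuple.comp_inv_comp_sort_of_monotone {n : ℕ} {α : Type*} [LinearOrder α]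
    {ψ : Fin n → α} (hψ : Monotone ψ) (σ : Perm (Fin n)) :
    (ψ ∘ ⇑σ⁻¹) ∘ ⇑(Tuple.sort (ψ ∘ ⇑σ⁻¹)) = ψ := by
  rw [Tuple.comp_perm_comp_sort_eq_comp_sort, Tuple.sort_eq_refl_iff_monotone.2 hψ]
  rfl

theorem Tuple.comp_inv_comp_mul_inv_sort {n : ℕ} {α : Type*} [LinearOrder α]
    {ψ : Fin n → α} (hψ : Monotone ψ) (σ : Perm (Fin n)) :
    (ψ ∘ ⇑σ⁻¹) ∘ ⇑(σ * (Tuple.sort (ψ ∘ ⇑σ⁻¹))⁻¹) = ψ ∘ ⇑σ⁻¹ := by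
  funext a
  have h := congrFun (Tuple.comp_inv_comp_sort_of_monotone hψ σ) ((Tuple.sort (ψ ∘ ⇑σ⁻¹))⁻¹ a)
  simpa using h.symm

def coloredPermEquiv (n p : ℕ) :
    ColoredPerm n p ≃ Perm (Fin n) × {ψ : Fin n → Fin p // Monotone ψ ∧ Surjective ψ} where
  toFun x := (x.1.1 * Tuple.sort x.1.2,
    ⟨x.1.2 ∘ Tuple.sort x.1.2, Tuple.monotone_sort _, x.2.1.comp (Equiv.surjective _)⟩)
  invFun y := ⟨(y.1 * (Tuple.sort (y.2.1 ∘ ⇑y.1⁻¹))⁻¹, y.2.1 ∘ ⇑y.1⁻¹),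
    y.2.2.2.comp (Equiv.surjective _), Tuple.comp_inv_comp_mul_inv_sort y.2.2.1 y.1⟩
  left_inv := by
    rintro ⟨⟨π, φ⟩, hφ, hπ⟩
    have hφ' : (φ ∘ ⇑(Tuple.sort φ)) ∘ ⇑(π * Tuple.sort φ)⁻¹ = φ := by
      funext a
      have := congrFun hπ (π⁻¹ a)
      simp_all
    ext1
    simp only [hφ', Prod.mk.injEq, and_true]
    exact mul_inv_cancel_right _ _
  right_inv := by
    rintro ⟨σ, ψ, hψ, hsurj⟩
    ext1
    · exact inv_mul_cancel_right _ _
    · exact Subtype.ext (Tuple.comp_inv_comp_sort_of_monotone hψ σ)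

theorem card_coloredPerm {n p : ℕ} (hn : 0 < n) (hp : 0 < p) :
    Nat.card (ColoredPerm n p) = n.factorial * (n - 1).choose (p - 1) := by
  obtain ⟨m, rfl⟩ := Nat.exists_eq_add_one_of_ne_zero hn.ne'
  obtain ⟨q, rfl⟩ := Nat.exists_eq_add_one_of_ne_zero hp.ne'
  rw [Nat.card_congr (coloredPermEquiv _ _), Nat.card_prod, card_monotone_surjective,
    Nat.card_perm, Nat.card_eq_fintype_card, Fintype.card_fin]
  rfl

def coloredFactEquiv {k n : ℕ} {p : Fin (k + 1) → ℕ} (hn : 0 < n) (hp0 : p 0 = 1) :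
    {x : (Fin (k + 1) → Perm (Fin n)) × ((t : Fin (k + 1)) → Fin n → Fin (p t)) //
      IsColoredFact p x} ≃ ((t : Fin k) → ColoredPerm n (p t.succ)) :=
  have : Subsingleton (Fin (p 0)) := by rw [hp0]; infer_instance
  { toFun x t := ⟨(x.1.1 t.succ, x.1.2 t.succ), x.2.2.1 _,
      ((x.1.1 t.succ).forall_sameCycle_imp_eq_iff _).1 (x.2.2.2 _)⟩
    invFun f :=
      ⟨(Fin.cons (finRotate n * (List.ofFn fun t => (f t).1.1).prod⁻¹) fun t => (f t).1.1,
        Fin.cons (fun _ => ⟨0, hp0.symm ▸ one_pos⟩) fun t => (f t).1.2), by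
      refine ⟨by simp [List.ofFn_succ], fun t => ?_, fun t => ?_⟩
      · cases t using Fin.cases with
        | zero => exact fun _ => ⟨⟨0, hn⟩, Subsingleton.elim _ _⟩
        | succ t => exact (f t).2.1
      · cases t using Fin.cases with
        | zero => exact fun _ _ _ => Subsingleton.elim _ _
        | succ t => exact ((f t).1.1.forall_sameCycle_imp_eq_iff _).2 (f t).2.2⟩
    left_inv := by
      rintro ⟨⟨π, φ⟩, hprod, -, -⟩
      rw [List.ofFn_succ, List.prod_cons] at hprod
      ext1
      refine Prod.ext (funext fun t => ?_) (funext fun t => ?_)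
      · cases t using Fin.cases with
        | zero => exact (eq_mul_inv_of_mul_eq hprod).symm
        | succ t => rfl
      · cases t using Fin.cases with
        | zero => exact Subsingleton.elim _ _
        | succ t => rfl
    right_inv _ := rfl }

end JacksonBaseCase

theorem jackson_base_case_general (k n : ℕ) [NeZero k] (hn : 1 ≤ n)
    (p : Fin k → ℕ) (hp0 : p 0 = 1) (hp : ∀ t, 0 < p t) :
    Ccard n k p =
      n.factorial ^ (k - 1) * ∏ t ∈ Finset.univ.erase 0, (n - 1).choose (p t - 1) := by
  obtain ⟨k, rfl⟩ := Nat.exists_eq_add_one_of_ne_zero (NeZero.ne k)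
  rw [Ccard, Nat.card_congr (coloredFactEquiv hn hp0), Nat.card_pi, ← compl_singleton,
    ← Fin.image_succ_univ, prod_image (Fin.succ_injective _).injOn]
  simp only [card_coloredPerm hn (hp _), prod_mul_distrib, prod_const, card_univ,
    Fintype.card_fin, Nat.add_sub_cancel]

theorem jackson_base_case (k n : ℕ) [NeZero k] (hk : 2 ≤ k) (hn : 1 ≤ n)
    (p : Fin k → ℕ) (hp0 : p 0 = 1) (hp : ∀ t, 0 < p t) :
    Ccard n k p =
      n.factorial ^ (k - 1) * ∏ t ∈ Finset.univ.erase 0, (n - 1).choose (p t - 1) :=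
  jackson_base_case_general k n hn p hp0 hp
end

section
/- The map σ is a bijection from the set of valid prebiddings of size n with subset-tuple of type (p_1,…,p_k) onto the set of valid biddings of size n and type (p_1,…,p_k); in particular these two sets have the same cardinality. -/
open Finset

/-! A linear order `≺` on `[k]×[n]` is encoded by its rank bijection
`ord : Fin k × Fin n ≃ Fin (k*n)` (`x ≺ y` iff `ord x < ord y`). -/

/-- The (injective) rank function of row `t`: `j ↦ ord (t, j)`. -/
def rowFun {k n : ℕ} (ord : Fin k × Fin n ≃ Fin (k * n)) (t : Fin k) : Fin n → Fin (k * n) :=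
  fun j => ord (t, j)

theorem rowFun_injective {k n : ℕ} (ord : Fin k × Fin n ≃ Fin (k * n)) (t : Fin k) :
    Function.Injective (rowFun ord t) := fun a b h =>
  congrArg Prod.snd (ord.injective h)

/-- The permutation `ω_t` of a prebidding: `ω_t i` is the element of `[n]` whose pair
`(t, ω_t i)` has the `i`-th smallest rank among row `t`, so that
`(t, ω_t 0) ≺ (t, ω_t 1) ≺ ⋯ ≺ (t, ω_t (n-1))`. -/
noncomputable def rowPerm {k n : ℕ} (ord : Fin k × Fin n ≃ Fin (k * n)) (t : Fin k) :
    Equiv.Perm (Fin n) :=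
  (((Finset.univ.image (rowFun ord t)).orderIsoOfFin
      (by rw [Finset.card_image_of_injective _ (rowFun_injective ord t), Finset.card_univ,
        Fintype.card_fin])).toEquiv.trans
    (Equiv.subtypeEquivRight (fun x => by
      simp only [Finset.mem_image, Finset.mem_univ, true_and, Set.mem_range]))).trans
    (Equiv.ofInjective _ (rowFun_injective ord t)).symm

/-- The map `σ` sending a prebidding `(≺, R)` to the bidding `((ω_1,…,ω_k), R)`. -/
noncomputable def sigmaMap {k n : ℕ}
    (P : (Fin k × Fin n ≃ Fin (k * n)) × (Fin n → Finset (Fin k))) :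
    (Fin k → Equiv.Perm (Fin n)) × (Fin n → Finset (Fin k)) :=
  (fun t => rowPerm P.1 t, P.2)

/-- Cyclic successor on `Fin N`. -/
def cyclicSucc {N : ℕ} (m : Fin N) : Fin N :=
  ⟨(m.val + 1) % N, Nat.mod_lt _ (Nat.lt_of_le_of_lt (Nat.zero_le _) m.isLt)⟩

/-- A valid prebidding: the greatest element of `≺` lies in the last row (type `k`), and
whenever `(t',i')` follows `(t,i)` in `≺` (cyclically, so the wrap-around from the greatest
element to the least one is included), one has `t' = α(t, R_i)`. -/
def ValidPrebidding {k n : ℕ} [NeZero k] (hn : 0 < n)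
    (P : (Fin k × Fin n ≃ Fin (k * n)) × (Fin n → Finset (Fin k))) : Prop :=
  (P.1.symm ⟨k * n - 1,
      Nat.sub_lt (Nat.mul_pos (Nat.pos_of_ne_zero (NeZero.ne k)) hn) Nat.one_pos⟩).1 =
    ⟨k - 1, Nat.sub_lt (Nat.pos_of_ne_zero (NeZero.ne k)) Nat.one_pos⟩ ∧
  ∀ m : Fin (k * n),
    (P.1.symm (cyclicSucc m)).1 = alpha (P.1.symm m).1 (P.2 (P.1.symm m).2)

/-- A valid bidding: `R ∈ M^n_{p_1,…,p_k}` and the graph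
`α((ω_1(n),…,ω_{k-1}(n)), R)` is a tree. -/
def ValidBidding {k n : ℕ} [NeZero k] (hn : 0 < n) (p : Fin k → ℕ)
    (B : (Fin k → Equiv.Perm (Fin n)) × (Fin n → Finset (Fin k))) : Prop :=
  InM p B.2 ∧
  IsTreeGraph (fun t => B.1 (Fin.castLE (Nat.sub_le k 1) t)
    ⟨n - 1, Nat.sub_lt hn Nat.one_pos⟩) B.2

/-!
A valid prebidding is a closed walk on the vertices `[k]` that traverses each of the `k n` edges
`(t, i) : t → α(t, R_i)` once, ending with an edge out of the root `k`; since every `α(·, R_i)` is a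
permutation, each vertex has in- and out-degree `n`, and `ω_t` lists the edges out of `t` in the
order the walk uses them. Along the last edges `t → α(t, R_{ω_t(n)})` the times of last departure
increase, so these edges form a tree leading to the root. Conversely, given `ω` with this tree,
the walk that starts after the root's last edge and leaves each `t` along `ω_t(1), ω_t(2), …` in
turn is, by the argument of the BEST theorem, a closed walk through all edges ending with the
root's last edge; and a valid prebidding is determined position by position by `R` and `ω`.
-/

section Alpha

open Fin.CommRing

variable {k : ℕ} [NeZero k]

theorem alpha_of_mem {t : Fin k} {R : Finset (Fin k)} (h : t ∈ R) : alpha t R = t - 1 :=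
  if_pos h

theorem exists_alpha_of_notMem {t : Fin k} {R : Finset (Fin k)} (h : t ∉ R) :
    ∃ r < k, alpha t R = t + r ∧ (∀ s, 1 ≤ s → s ≤ r → t + (s : Fin k) ∈ R) ∧
      t + ((r + 1 : ℕ) : Fin k) ∉ R := by
  set P : ℕ → Prop := fun r => ∀ s ∈ Finset.Icc 1 r, t + (s : Fin k) ∈ R
  have hP : P 0 := fun s hs => by simp at hs
  have hle : Nat.findGreatest P (k - 1) ≤ k - 1 := Nat.findGreatest_le _
  have hspec : P (Nat.findGreatest P (k - 1)) := Nat.findGreatest_spec (Nat.zero_le _) hP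
  refine ⟨Nat.findGreatest P (k - 1), by have := NeZero.pos k; omega, if_neg h,
    fun s h1 h2 => hspec s (Finset.mem_Icc.2 ⟨h1, h2⟩), fun hmem => ?_⟩
  rcases hle.eq_or_lt with heq | hlt
  · rw [heq, Nat.sub_add_cancel NeZero.one_le, Fin.natCast_self, add_zero] at hmem
    exact h hmem
  · refine Nat.findGreatest_is_greatest (Nat.lt_succ_self _) hlt fun s hs => ?_
    obtain ⟨h1, h2⟩ := Finset.mem_Icc.1 hs
    rcases h2.eq_or_lt with rfl | h2
    · exact hmem
    · exact hspec s (Finset.mem_Icc.2 ⟨h1, Nat.lt_succ_iff.1 h2⟩)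

theorem alpha_add_one_mem_iff (t : Fin k) (R : Finset (Fin k)) : alpha t R + 1 ∈ R ↔ t ∈ R := by
  by_cases h : t ∈ R
  · simp [alpha_of_mem h, h]
  · obtain ⟨r, -, hα, -, hout⟩ := exists_alpha_of_notMem h
    rw [hα, add_assoc, ← Nat.cast_succ]
    exact iff_of_false hout h

theorem eq_of_alpha_eq_of_notMem {t₁ t₂ : Fin k} {R : Finset (Fin k)} (h₁ : t₁ ∉ R) (h₂ : t₂ ∉ R)
    (heq : alpha t₁ R = alpha t₂ R) : t₁ = t₂ := by
  by_contra hne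
  obtain ⟨r₁, hr₁, hα₁, hin₁, -⟩ := exists_alpha_of_notMem h₁
  obtain ⟨r₂, hr₂, hα₂, hin₂, -⟩ := exists_alpha_of_notMem h₂
  rw [hα₁, hα₂] at heq
  -- for `d = t₂ - t₁`, either `t₂ = t₁ + d` lies in the run of `R` after `t₁`,
  -- or `t₁ = t₂ + (k - d)` lies in the run after `t₂`
  set d := t₂ - t₁ with hd
  have hd0 : 0 < d.val := Nat.pos_of_ne_zero fun h => hne (sub_eq_zero.1 (Fin.ext h)).symm
  have hr : r₁ = (d.val + r₂) % k := by
    have : (r₁ : Fin k) = d + r₂ := by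
      apply add_left_cancel (a := t₁); rw [heq, hd]; ring
    simpa [Fin.val_add, Nat.mod_eq_of_lt hr₁, Nat.mod_eq_of_lt hr₂] using congrArg Fin.val this
  rcases Nat.lt_or_ge (d.val + r₂) k with hlt | hge
  · rw [Nat.mod_eq_of_lt hlt] at hr
    have := hin₁ d.val hd0 (by omega)
    rw [Fin.cast_val_eq_self, hd, add_sub_cancel] at this
    exact h₂ this
  · have hdk := d.isLt
    rw [Nat.mod_eq_sub_mod hge, Nat.mod_eq_of_lt (by omega)] at hr
    have hcast : ((k - d.val : ℕ) : Fin k) = -d := by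
      rw [Nat.cast_sub hdk.le, Fin.natCast_self, Fin.cast_val_eq_self, zero_sub]
    have := hin₂ (k - d.val) (by omega) (by omega)
    rw [hcast, hd, neg_sub, add_sub_cancel] at this
    exact h₁ this

theorem alpha_injective (R : Finset (Fin k)) : Function.Injective (alpha · R) := by
  intro t₁ t₂ heq
  simp only at heq
  have hmem : t₁ ∈ R ↔ t₂ ∈ R := by
    rw [← alpha_add_one_mem_iff, heq, alpha_add_one_mem_iff]
  by_cases h₁ : t₁ ∈ R
  · rw [alpha_of_mem h₁, alpha_of_mem (hmem.1 h₁)] at heq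
    exact sub_left_injective heq
  · exact eq_of_alpha_eq_of_notMem h₁ (hmem.not.1 h₁) heq

theorem alpha_bijective (R : Finset (Fin k)) : Function.Bijective (alpha · R) :=
  Finite.injective_iff_bijective.1 (alpha_injective R)

theorem card_alpha_fiber {n : ℕ} (R : Fin n → Finset (Fin k)) (ω : Fin k → Equiv.Perm (Fin n))
    (v : Fin k) : #{e : Fin k × Fin n | alpha e.1 (R (ω e.1 e.2)) = v} = n := by
  have hfib : ∀ i, #{t | alpha t (R i) = v} = 1 := fun i => by
    obtain ⟨t, ht⟩ := (alpha_bijective (R i)).2 v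
    rw [Finset.card_eq_one]
    exact ⟨t, by ext t'; simpa [← ht] using (alpha_bijective (R i)).1.eq_iff⟩
  calc #{e : Fin k × Fin n | alpha e.1 (R (ω e.1 e.2)) = v}
      = #{e : Fin k × Fin n | alpha e.1 (R e.2) = v} :=
        Finset.card_equiv (Equiv.prodShear (Equiv.refl _) ω) (by simp)
    _ = ∑ i, #{t | alpha t (R i) = v} := by
        simp only [Finset.card_filter, Fintype.sum_prod_type_right]
    _ = n := by simp [hfib]

end Alpha

theorem exists_iterate_eq_of_lt_apply {α β : Type*} [Finite α] [Preorder β] {f : α → α} {a₀ : α}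
    (L : α → β) (hL : ∀ a ≠ a₀, L a < L (f a)) (a : α) : ∃ j, f^[j] a = a₀ := by
  by_contra! h
  have hmono : StrictMono fun j => L (f^[j] a) := strictMono_nat_of_lt_succ fun j => by
    rw [Function.iterate_succ_apply']
    exact hL _ (h j)
  exact not_injective_infinite_finite (fun j => f^[j] a) fun i j hij =>
    hmono.injective (congrArg L hij)

section TreeGraph

variable {k n : ℕ} [NeZero k]

theorem castLE_ne_top (t : Fin (k - 1)) : Fin.castLE (Nat.sub_le k 1) t ≠ ⊤ := by
  intro h
  have := congrArg Fin.val h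
  simp only [Fin.val_castLE, Fin.val_top] at this
  omega

theorem exists_castLE_eq {v : Fin k} (hv : v ≠ ⊤) :
    ∃ t : Fin (k - 1), Fin.castLE (Nat.sub_le k 1) t = v := by
  have : v.val ≠ k - 1 := fun h => hv (Fin.ext (h.trans (Fin.val_top k).symm))
  exact ⟨⟨v, by omega⟩, rfl⟩

variable {idx : Fin (k - 1) → Fin n} {R : Fin n → Finset (Fin k)} {f : Fin k → Fin k}

theorem fromEdgeSet_treeEdges_adj_iff
    (hf : ∀ t, alpha (t.castLE (k.sub_le 1)) (R (idx t)) = f (t.castLE (k.sub_le 1)))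
    {u w : Fin k} :
    (SimpleGraph.fromEdgeSet (Set.range (treeEdges idx R))).Adj u w ↔
      (u ≠ ⊤ ∧ w = f u ∨ w ≠ ⊤ ∧ u = f w) ∧ u ≠ w := by
  simp only [SimpleGraph.fromEdgeSet_adj, Set.mem_range, treeEdges, hf, Sym2.eq_iff]
  refine and_congr_left fun _ => ⟨?_, ?_⟩
  · rintro ⟨t, ⟨rfl, rfl⟩ | ⟨rfl, rfl⟩⟩
    exacts [.inl ⟨castLE_ne_top t, rfl⟩, .inr ⟨castLE_ne_top t, rfl⟩]
  · rintro (⟨hu, rfl⟩ | ⟨hw, rfl⟩)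
    · obtain ⟨t, rfl⟩ := exists_castLE_eq hu
      exact ⟨t, .inl ⟨rfl, rfl⟩⟩
    · obtain ⟨t, rfl⟩ := exists_castLE_eq hw
      exact ⟨t, .inr ⟨rfl, rfl⟩⟩

theorem isTreeGraph_iff_forall_exists_iterate_eq_top
    (hf : ∀ t, alpha (t.castLE (k.sub_le 1)) (R (idx t)) = f (t.castLE (k.sub_le 1))) :
    IsTreeGraph idx R ↔ ∀ v, ∃ j, f^[j] v = ⊤ := by
  have hadj := fun {u w} => fromEdgeSet_treeEdges_adj_iff (u := u) (w := w) hf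
  constructor
  · rintro ⟨-, -, hconn⟩ v
    have := (SimpleGraph.reachable_iff_reflTransGen _ _).1 (hconn.preconnected v ⊤)
    refine this.head_induction_on ⟨0, rfl⟩ ?_
    rintro a c hac - ⟨j, hj⟩
    rcases (hadj.1 hac).1 with ⟨-, rfl⟩ | ⟨hc, rfl⟩
    · exact ⟨j + 1, hj⟩
    · cases j with
      | zero => exact absurd hj hc
      | succ j => exact ⟨j, hj⟩
  · intro hreach
    have hfix : ∀ v, f v = v → v = ⊤ := fun v hv => by
      obtain ⟨j, hj⟩ := hreach v
      rwa [Function.iterate_fixed hv] at hj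
    refine ⟨fun t h => castLE_ne_top t (hfix _ (h.trans (hf t)).symm), fun a b hab => ?_, ?_⟩
    · simp only [treeEdges, hf, Sym2.eq_iff] at hab
      rcases hab with ⟨h, -⟩ | ⟨h₁, h₂⟩
      · exact Fin.castLE_injective _ h
      · -- a two-cycle `a ↔ b` of `f` would never reach the root
        set u := Fin.castLE (Nat.sub_le k 1) a
        have hper : Function.IsPeriodicPt f 2 u := by
          show f (f u) = u
          rw [h₂, h₁]
        obtain ⟨j, hj⟩ := hreach u
        rw [← hper.iterate_mod_apply] at hj
        rcases Nat.mod_two_eq_zero_or_one j with h | h <;> rw [h] at hj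
        · exact absurd hj (castLE_ne_top a)
        · exact absurd (h₂.symm.trans hj) (castLE_ne_top b)
    · rw [SimpleGraph.connected_iff]
      refine ⟨fun u w => ?_, ⟨⊤⟩⟩
      suffices h : ∀ j v, f^[j] v = ⊤ →
          (SimpleGraph.fromEdgeSet (Set.range (treeEdges idx R))).Reachable v ⊤ by
        obtain ⟨i, hi⟩ := hreach u
        obtain ⟨j, hj⟩ := hreach w
        exact (h i u hi).trans (h j w hj).symm
      intro j
      induction j with
      | zero => rintro v rfl; rfl
      | succ j ih =>
        intro v hv
        by_cases hv' : v = ⊤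
        · rw [hv']
        · exact (hadj.2 ⟨.inl ⟨hv', rfl⟩, fun h => hv' (hfix v h.symm)⟩).reachable.trans (ih _ hv)

end TreeGraph

section RowPerm

variable {k n : ℕ} (ord : Fin k × Fin n ≃ Fin (k * n)) (t : Fin k)

theorem card_image_rowFun : #(univ.image (rowFun ord t)) = n := by
  rw [card_image_of_injective _ (rowFun_injective ord t), card_univ, Fintype.card_fin]

theorem rowPerm_apply_eq_orderEmbOfFin (j : Fin n) :
    ord (t, rowPerm ord t j) =
      (univ.image (rowFun ord t)).orderEmbOfFin (card_image_rowFun ord t) j :=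
  Equiv.apply_ofInjective_symm (rowFun_injective ord t) _

theorem rowPerm_strictMono : StrictMono fun j => ord (t, rowPerm ord t j) := by
  simpa only [rowPerm_apply_eq_orderEmbOfFin] using OrderEmbedding.strictMono _

theorem rowPerm_eq_of_strictMono {σ : Equiv.Perm (Fin n)} (hσ : StrictMono fun j => ord (t, σ j)) :
    rowPerm ord t = σ := by
  have h := Finset.orderEmbOfFin_unique (card_image_rowFun ord t)
    (fun j => mem_image_of_mem (rowFun ord t) (mem_univ (σ j))) hσ
  ext j
  exact congrArg Fin.val (congrArg Prod.snd (ord.injective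
    ((rowPerm_apply_eq_orderEmbOfFin ord t j).trans (congrFun h j).symm)))

theorem le_rowPerm_top [NeZero n] (i : Fin n) : ord (t, i) ≤ ord (t, rowPerm ord t ⊤) := by
  simpa using (rowPerm_strictMono ord t).monotone (le_top (a := (rowPerm ord t).symm i))

theorem card_filter_lt_rowPerm (j : Fin n) :
    #{m | m < ord (t, rowPerm ord t j) ∧ (ord.symm m).1 = t} = j := by
  have hmono := rowPerm_strictMono ord t
  rw [← Fin.card_Iio j, ← card_image_of_injective _ hmono.injective]
  congr 1
  ext m
  simp only [mem_filter, mem_univ, true_and, mem_image, mem_Iio]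
  constructor
  · rintro ⟨hm, ht⟩
    have hm' : ord (t, (ord.symm m).2) = m := by rw [← ht]; simp
    refine ⟨(rowPerm ord t).symm (ord.symm m).2, ?_, by simpa using hm'⟩
    rw [← hmono.lt_iff_lt]
    simpa [hm'] using hm
  · rintro ⟨j', hj', rfl⟩
    exact ⟨hmono hj', by simp⟩

theorem val_rowPerm_symm_apply (m : Fin (k * n)) :
    ((rowPerm ord (ord.symm m).1).symm (ord.symm m).2 : ℕ) =
      #{m' | m' < m ∧ (ord.symm m').1 = (ord.symm m).1} := by
  have := card_filter_lt_rowPerm ord (ord.symm m).1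
    ((rowPerm ord (ord.symm m).1).symm (ord.symm m).2)
  simpa using this.symm

end RowPerm

namespace GreedyWalk

variable {V : Type*} [DecidableEq V] {n : ℕ} [NeZero n] (next : V → Fin n → V) (start : V)

/-- The greedy walk leaves a vertex along its out-edges `0, 1, 2, …` in turn; its state is the
current vertex together with the number of times each vertex has been left. Edge indices are
read modulo `n`, a wrap-around that never occurs in the range used (`noOverflow`). -/
def state : ℕ → V × (V → ℕ)
  | 0 => (start, 0)
  | m + 1 =>
    let s := state m
    (next s.1 (Fin.ofNat n (s.2 s.1)), Function.update s.2 s.1 (s.2 s.1 + 1))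

def vertex (m : ℕ) : V := (state next start m).1

def count (m : ℕ) (v : V) : ℕ := (state next start m).2 v

def edge (m : ℕ) : V × Fin n :=
  (vertex next start m, Fin.ofNat n (count next start m (vertex next start m)))

def NoOverflow (M : ℕ) : Prop :=
  ∀ m < M, count next start m (vertex next start m) < n

variable {next start}

@[simp]
theorem vertex_zero : vertex next start 0 = start := rfl

@[simp]
theorem count_zero (v : V) : count next start 0 v = 0 := rfl

@[simp]
theorem edge_fst (m : ℕ) : (edge next start m).1 = vertex next start m := rfl

theorem vertex_succ (m : ℕ) :
    vertex next start (m + 1) = next (edge next start m).1 (edge next start m).2 := rfl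

theorem count_succ (m : ℕ) (v : V) :
    count next start (m + 1) v =
      count next start m v + if vertex next start m = v then 1 else 0 := by
  rcases eq_or_ne (vertex next start m) v with rfl | hv
  · rw [if_pos rfl]
    exact Function.update_self _ _ _
  · rw [if_neg hv, add_zero]
    exact Function.update_of_ne hv.symm _ _

theorem count_mono (v : V) : Monotone fun m => count next start m v :=
  monotone_nat_of_le_succ fun m => by
    rw [count_succ]
    exact Nat.le_add_right _ _

theorem val_edge_snd {m : ℕ} (h : count next start m (vertex next start m) < n) :
    ((edge next start m).2 : ℕ) = count next start m (vertex next start m) := by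
  rw [edge, Fin.val_ofNat, Nat.mod_eq_of_lt h]

theorem count_le {M : ℕ} (h : NoOverflow next start M) {m : ℕ} (hm : m ≤ M) (v : V) :
    count next start m v ≤ n := by
  induction m with
  | zero => exact Nat.zero_le _
  | succ m ih =>
    rw [count_succ]
    split_ifs with hv
    · exact hv ▸ h m hm
    · exact add_zero (count next start m v) ▸ ih (by omega)

theorem sum_count [Fintype V] (m : ℕ) : ∑ v, count next start m v = m := by
  induction m with
  | zero => simp
  | succ m ih => simp [count_succ, sum_add_distrib, ih]

section UsedEdges

variable [Fintype V]

variable (next start) in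
def usedEdges (m : ℕ) : Finset (V × Fin n) :=
  {e | (e.2 : ℕ) < count next start m e.1}

theorem edge_notMem_usedEdges {m : ℕ} (h : count next start m (vertex next start m) < n) :
    edge next start m ∉ usedEdges next start m := by
  simp [usedEdges, val_edge_snd h]

theorem usedEdges_succ {m : ℕ} (h : count next start m (vertex next start m) < n) :
    usedEdges next start (m + 1) = insert (edge next start m) (usedEdges next start m) := by
  ext ⟨v, j⟩
  simp only [usedEdges, mem_filter, mem_univ, true_and, mem_insert, count_succ, Prod.ext_iff,
    edge_fst, Fin.ext_iff, val_edge_snd h]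
  split_ifs with hv
  · subst hv
    simp only [true_and]
    omega
  · simp [Ne.symm hv]

theorem usedEdges_eq_image {m : ℕ} (h : NoOverflow next start m) :
    usedEdges next start m = (range m).image (edge next start) := by
  induction m with
  | zero => ext; simp [usedEdges]
  | succ m ih =>
    rw [usedEdges_succ (h m m.lt_succ_self), ih fun m' hm' => h m' (hm'.trans m.lt_succ_self),
      range_add_one, image_insert]

theorem card_usedEdges_into_add {m : ℕ} (h : NoOverflow next start m) (v : V) :
    #{e ∈ usedEdges next start m | next e.1 e.2 = v} + (if start = v then 1 else 0) =
      count next start m v + if vertex next start m = v then 1 else 0 := by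
  induction m with
  | zero => simp [usedEdges]; rfl
  | succ m ih =>
    have hm := h m m.lt_succ_self
    have hnew : edge next start m ∉ {e ∈ usedEdges next start m | next e.1 e.2 = v} :=
      fun he => edge_notMem_usedEdges hm (mem_filter.1 he).1
    have hcard : #{e ∈ usedEdges next start (m + 1) | next e.1 e.2 = v} =
        #{e ∈ usedEdges next start m | next e.1 e.2 = v} +
          if vertex next start (m + 1) = v then 1 else 0 := by
      rw [usedEdges_succ hm, filter_insert, vertex_succ]
      split_ifs
      · rw [card_insert_of_notMem hnew]
      · rfl
    have := ih fun m' hm' => h m' (hm'.trans m.lt_succ_self)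
    rw [hcard, count_succ]
    split_ifs at this ⊢ <;> omega

theorem card_usedEdges_into_le {m : ℕ} (hin : ∀ v, #{e : V × Fin n | next e.1 e.2 = v} = n)
    (v : V) : #{e ∈ usedEdges next start m | next e.1 e.2 = v} ≤ n :=
  (card_le_card (filter_subset_filter _ (subset_univ _))).trans_eq (hin v)

end UsedEdges

section Eulerian

variable [Fintype V] {root : V}

/-- The last edge of a vertex `s` left fewer than `n` times is unused, so its target
`f s = next s ⊤` has been entered, hence (the walk being closed) left, fewer than `n` times;
iterating `f` leads from `s` to `root`, which has been left `n` times. -/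
theorem count_eq_of_count_root_eq (hin : ∀ v, #{e : V × Fin n | next e.1 e.2 = v} = n)
    (hreach : ∀ v, ∃ j, (next · ⊤)^[j] v = root) {m : ℕ}
    (h : NoOverflow next (next root ⊤) m) (hclosed : vertex next (next root ⊤) m = next root ⊤)
    (hroot : count next (next root ⊤) m root = n) (v : V) :
    count next (next root ⊤) m v = n := by
  have hcount : ∀ v, count next (next root ⊤) m v =
      #{e ∈ usedEdges next (next root ⊤) m | next e.1 e.2 = v} := fun v => by
    have := card_usedEdges_into_add h v
    rw [hclosed] at this
    omega
  have hstep : ∀ s, count next (next root ⊤) m s < n →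
      count next (next root ⊤) m (next s ⊤) < n := by
    intro s hs
    rw [hcount]
    refine (card_lt_card ((ssubset_iff_of_subset (filter_subset_filter _ (subset_univ _))).2
      ⟨(s, ⊤), by simp, fun he => ?_⟩)).trans_eq (hin _)
    have h₁ : n - 1 < count next (next root ⊤) m s := by
      simpa only [Fin.val_top] using (mem_filter.1 (mem_filter.1 he).1).2
    omega
  refine le_antisymm (count_le h le_rfl v) (not_lt.1 fun hv => ?_)
  obtain ⟨j, hj⟩ := hreach v
  have := Function.Iterate.rec (fun s => count next (next root ⊤) m s < n) hv hstep j
  rw [hj, hroot] at this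
  exact lt_irrefl n this

theorem noOverflow (hin : ∀ v, #{e : V × Fin n | next e.1 e.2 = v} = n)
    (hreach : ∀ v, ∃ j, (next · ⊤)^[j] v = root) :
    NoOverflow next (next root ⊤) (Fintype.card V * n) := by
  intro M
  induction M using Nat.strong_induction_on with
  | _ M ih =>
  intro hM
  have hM' : NoOverflow next (next root ⊤) M := fun m hm => ih m hm (hm.trans hM)
  set u := vertex next (next root ⊤) M
  by_contra! hfull
  have hbal := card_usedEdges_into_add hM' u
  have hle := card_usedEdges_into_le (m := M) (start := next root ⊤) hin u
  rw [if_pos rfl, le_antisymm (count_le hM' le_rfl u) hfull] at hbal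
  -- being at `u` after leaving it `n` times takes `n + 1` arrivals, so `u` is the start
  have hstart : next root ⊤ = u := by
    by_contra hne
    rw [if_neg hne] at hbal
    omega
  -- hence all edges into `u` are used, among them the last edge `(root, ⊤)`
  have hused : {e ∈ usedEdges next (next root ⊤) M | next e.1 e.2 = u} =
      ({e | next e.1 e.2 = u} : Finset (V × Fin n)) := by
    refine eq_of_subset_of_card_le (filter_subset_filter _ (subset_univ _)) ?_
    rw [hin, if_pos hstart] at *
    omega
  have hroot : (root, ⊤) ∈ usedEdges next (next root ⊤) M := by
    have : (root, ⊤) ∈ ({e | next e.1 e.2 = u} : Finset (V × Fin n)) := by simpa using hstart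
    rw [← hused] at this
    exact (mem_filter.1 this).1
  have hroot' : count next (next root ⊤) M root = n := by
    have h₁ : n - 1 < count next (next root ⊤) M root := by
      simpa only [Fin.val_top] using (mem_filter.1 hroot).2
    have := count_le hM' le_rfl root
    omega
  have hall := count_eq_of_count_root_eq hin hreach hM' hstart.symm hroot'
  have := sum_count (next := next) (start := next root ⊤) M
  simp only [hall, sum_const, card_univ, smul_eq_mul] at this
  omega

theorem count_card_mul (hin : ∀ v, #{e : V × Fin n | next e.1 e.2 = v} = n)
    (hreach : ∀ v, ∃ j, (next · ⊤)^[j] v = root) (v : V) :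
    count next (next root ⊤) (Fintype.card V * n) v = n := by
  have hle := count_le (noOverflow hin hreach) le_rfl
  by_contra hne
  have := sum_lt_sum (fun v _ => hle v) ⟨v, mem_univ v, lt_of_le_of_ne (hle v) hne⟩
  rw [sum_count, sum_const, card_univ, smul_eq_mul] at this
  exact lt_irrefl _ this

theorem image_edge_range (hin : ∀ v, #{e : V × Fin n | next e.1 e.2 = v} = n)
    (hreach : ∀ v, ∃ j, (next · ⊤)^[j] v = root) :
    (range (Fintype.card V * n)).image (edge next (next root ⊤)) = univ := by
  rw [← usedEdges_eq_image (noOverflow hin hreach), eq_univ_iff_forall]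
  intro e
  simp [usedEdges, count_card_mul hin hreach]

theorem exists_edge_eq_root_top (hin : ∀ v, #{e : V × Fin n | next e.1 e.2 = v} = n)
    (hreach : ∀ v, ∃ j, (next · ⊤)^[j] v = root) :
    ∃ T, T + 1 = Fintype.card V * n ∧ edge next (next root ⊤) T = (root, ⊤) := by
  have hmem : (root, ⊤) ∈ (range (Fintype.card V * n)).image (edge next (next root ⊤)) := by
    rw [image_edge_range hin hreach]
    exact mem_univ _
  obtain ⟨T, hT, hedge⟩ := mem_image.1 hmem
  have hno := noOverflow hin hreach
  have hvT : vertex next (next root ⊤) T = root := congrArg Prod.fst hedge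
  have hcT : count next (next root ⊤) T root = n - 1 := by
    have := val_edge_snd (hno T (mem_range.1 hT))
    rw [hedge, hvT, Fin.val_top] at this
    exact this.symm
  have hclosed : vertex next (next root ⊤) (T + 1) = next root ⊤ := by
    rw [vertex_succ, hedge]
  have hroot : count next (next root ⊤) (T + 1) root = n := by
    rw [count_succ, if_pos hvT, hcT]
    have := NeZero.pos n
    omega
  have hall := count_eq_of_count_root_eq hin hreach
    (fun m hm => hno m (lt_of_lt_of_le hm (mem_range.1 hT))) hclosed hroot
  have := sum_count (next := next) (start := next root ⊤) (T + 1)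
  simp only [hall, sum_const, card_univ, smul_eq_mul] at this
  exact ⟨T, this.symm, hedge⟩

theorem vertex_card_mul_sub_one (hin : ∀ v, #{e : V × Fin n | next e.1 e.2 = v} = n)
    (hreach : ∀ v, ∃ j, (next · ⊤)^[j] v = root) :
    vertex next (next root ⊤) (Fintype.card V * n - 1) = root := by
  obtain ⟨T, hT, hedge⟩ := exists_edge_eq_root_top hin hreach
  rw [← hT, Nat.add_sub_cancel]
  exact congrArg Prod.fst hedge

theorem vertex_succ_mod (hin : ∀ v, #{e : V × Fin n | next e.1 e.2 = v} = n)
    (hreach : ∀ v, ∃ j, (next · ⊤)^[j] v = root) {m : ℕ} (hm : m < Fintype.card V * n) :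
    vertex next (next root ⊤) ((m + 1) % (Fintype.card V * n)) =
      next (edge next (next root ⊤) m).1 (edge next (next root ⊤) m).2 := by
  obtain ⟨T, hT, hedge⟩ := exists_edge_eq_root_top hin hreach
  rcases Nat.lt_or_ge (m + 1) (Fintype.card V * n) with h | h
  · rw [Nat.mod_eq_of_lt h, vertex_succ]
  · obtain rfl : m = T := by omega
    rw [hT, Nat.mod_self, vertex_zero, hedge]

end Eulerian

end GreedyWalk

theorem Fin.mk_sub_one_eq_top {n : ℕ} [NeZero n] (h : n - 1 < n) : (⟨n - 1, h⟩ : Fin n) = ⊤ :=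
  Fin.ext (Fin.val_top n).symm

theorem val_cyclicSucc {N : ℕ} (m : Fin N) : (cyclicSucc m : ℕ) = (m + 1) % N := rfl

theorem lt_cyclicSucc {N : ℕ} [NeZero N] {m : Fin N} (h : m ≠ ⊤) : m < cyclicSucc m := by
  have : m.val ≠ N - 1 := fun h' => h (Fin.ext (h'.trans (Fin.val_top N).symm))
  rw [Fin.lt_def, val_cyclicSucc, Nat.mod_eq_of_lt (by omega)]
  omega

theorem cyclicSucc_top {N : ℕ} [NeZero N] : cyclicSucc (⊤ : Fin N) = 0 := by
  ext
  rw [val_cyclicSucc, Fin.val_top, Nat.sub_add_cancel NeZero.one_le, Nat.mod_self, Fin.val_zero]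

section Prebidding

variable {k n : ℕ} [NeZero k] [NeZero n] {ord : Fin k × Fin n ≃ Fin (k * n)}
  {R : Fin n → Finset (Fin k)}

theorem ValidPrebidding.symm_top (hv : ValidPrebidding (NeZero.pos n) (ord, R)) :
    ord.symm ⊤ = (⊤, rowPerm ord ⊤ ⊤) := by
  have hrow : (ord.symm ⊤).1 = ⊤ := by simpa only [Fin.mk_sub_one_eq_top] using hv.1
  have h : ⊤ ≤ ord (⊤, rowPerm ord ⊤ ⊤) :=
    calc ⊤ = ord (ord.symm ⊤) := (ord.apply_symm_apply ⊤).symm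
      _ = ord (⊤, (ord.symm ⊤).2) := congrArg ord (Prod.ext hrow rfl)
      _ ≤ _ := le_rowPerm_top ord ⊤ _
  rw [← top_le_iff.1 h, Equiv.symm_apply_apply]

theorem ValidPrebidding.fst_symm_zero (hv : ValidPrebidding (NeZero.pos n) (ord, R)) :
    (ord.symm 0).1 = alpha ⊤ (R (rowPerm ord ⊤ ⊤)) := by
  simpa only [cyclicSucc_top, hv.symm_top] using hv.2 ⊤

theorem ValidPrebidding.validBidding_sigmaMap {p : Fin k → ℕ}
    (hv : ValidPrebidding (NeZero.pos n) (ord, R)) (hR : InM p R) :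
    ValidBidding (NeZero.pos n) p (sigmaMap (ord, R)) := by
  refine ⟨hR, (isTreeGraph_iff_forall_exists_iterate_eq_top
    (f := fun t => alpha t (R (rowPerm ord t ⊤))) fun t => by
      simp only [sigmaMap, Fin.mk_sub_one_eq_top]).2 ?_⟩
  -- the last position of row `t` precedes that of row `f t`, unless `t` is the root row
  refine exists_iterate_eq_of_lt_apply (fun t => ord (t, rowPerm ord t ⊤)) fun t ht => ?_
  set m := ord (t, rowPerm ord t ⊤)
  have hm : m ≠ ⊤ := fun h => ht (by
    have := congrArg Prod.fst hv.symm_top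
    rw [← h] at this
    simpa [m] using this)
  have hsucc : (ord.symm (cyclicSucc m)).1 = alpha t (R (rowPerm ord t ⊤)) := by
    simpa [m] using hv.2 m
  calc m < cyclicSucc m := lt_cyclicSucc hm
    _ = ord ((ord.symm (cyclicSucc m)).1, (ord.symm (cyclicSucc m)).2) := by simp
    _ ≤ _ := hsucc ▸ le_rowPerm_top ord _ _

theorem ValidPrebidding.eq_of_rowPerm_eq {o₁ o₂ : Fin k × Fin n ≃ Fin (k * n)}
    (h₁ : ValidPrebidding (NeZero.pos n) (o₁, R)) (h₂ : ValidPrebidding (NeZero.pos n) (o₂, R))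
    (hω : ∀ t, rowPerm o₁ t = rowPerm o₂ t) : o₁ = o₂ := by
  suffices h : ∀ m, o₁.symm m = o₂.symm m from Equiv.symm_bijective.injective (Equiv.ext h)
  intro m
  induction m using WellFoundedLT.induction with
  | _ m ih =>
  -- the row at `m` is determined by the previous position, the column by the rank of `m`
  -- among the earlier positions of its row
  have hrow : (o₁.symm m).1 = (o₂.symm m).1 := by
    rcases eq_or_ne m 0 with rfl | hm
    · rw [h₁.fst_symm_zero, h₂.fst_symm_zero, hω]
    · have hpos : 0 < m.val := Nat.pos_of_ne_zero (Fin.val_ne_iff.2 hm)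
      set m' : Fin (k * n) := ⟨m - 1, by omega⟩
      have hm' : cyclicSucc m' = m := Fin.ext (by
        rw [val_cyclicSucc, Nat.sub_add_cancel hpos, Nat.mod_eq_of_lt m.isLt])
      rw [← hm', h₁.2, h₂.2, ih m' (by rw [Fin.lt_def]; exact Nat.sub_lt hpos one_pos)]
  have hrank : (rowPerm o₁ (o₁.symm m).1).symm (o₁.symm m).2 =
      (rowPerm o₂ (o₂.symm m).1).symm (o₂.symm m).2 := by
    ext
    rw [val_rowPerm_symm_apply, val_rowPerm_symm_apply]
    congr 1
    exact filter_congr fun m' _ => and_congr_right fun hm' => by rw [ih m' hm', hrow]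
  refine Prod.ext hrow ?_
  have := congrArg (rowPerm o₂ (o₂.symm m).1) hrank
  rwa [← hrow, ← hω, Equiv.apply_symm_apply, Equiv.apply_symm_apply] at this

end Prebidding

section Bidding

variable {k n : ℕ} [NeZero k] [NeZero n]

open GreedyWalk in
theorem ValidBidding.exists_validPrebidding {p : Fin k → ℕ}
    {B : (Fin k → Equiv.Perm (Fin n)) × (Fin n → Finset (Fin k))}
    (hB : ValidBidding (NeZero.pos n) p B) :
    ∃ ord, ValidPrebidding (NeZero.pos n) (ord, B.2) ∧ sigmaMap (ord, B.2) = B := by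
  obtain ⟨ω, R⟩ := B
  set next : Fin k → Fin n → Fin k := fun t j => alpha t (R (ω t j))
  have hin : ∀ v, #{e : Fin k × Fin n | next e.1 e.2 = v} = n := card_alpha_fiber R ω
  have hreach : ∀ v, ∃ j, (next · ⊤)^[j] v = ⊤ :=
    (isTreeGraph_iff_forall_exists_iterate_eq_top fun t => by
      simp [next, Fin.mk_sub_one_eq_top]).1 hB.2
  have hsurj : Function.Surjective fun m : Fin (k * n) => edge next (next ⊤ ⊤) m := by
    intro e
    have he : e ∈ (range (Fintype.card (Fin k) * n)).image (edge next (next ⊤ ⊤)) := by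
      rw [image_edge_range hin hreach]
      exact mem_univ e
    obtain ⟨m, hm, rfl⟩ := mem_image.1 he
    exact ⟨⟨m, by simpa using hm⟩, rfl⟩
  -- the prebidding lists the steps of the walk, the `j`-th departure from `t` being `(t, ω t j)`
  have hbij : Function.Bijective fun m : Fin (k * n) => edge next (next ⊤ ⊤) m :=
    (Fintype.bijective_iff_surjective_and_card _).2 ⟨hsurj, by simp⟩
  set ord := ((Equiv.ofBijective _ hbij).trans (Equiv.prodShear (Equiv.refl _) ω)).symm
  refine ⟨ord, ⟨?_, fun m => ?_⟩, ?_⟩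
  · simpa [ord, Fin.mk_sub_one_eq_top] using vertex_card_mul_sub_one hin hreach
  · simpa [ord, val_cyclicSucc] using vertex_succ_mod hin hreach (m := m) (by simp)
  · refine Prod.ext (funext fun t => rowPerm_eq_of_strictMono ord t fun j j' hj => ?_) rfl
    have hcount : ∀ j, count next (next ⊤ ⊤) (ord (t, ω t j)) t = j := fun j => by
      have hedge : edge next (next ⊤ ⊤) (ord (t, ω t j)) = (t, j) := by
        have : ord (t, ω t j) = (Equiv.ofBijective _ hbij).symm (t, j) := by simp [ord]
        rw [this]
        exact Equiv.ofBijective_apply_symm_apply _ hbij _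
      have := val_edge_snd (noOverflow hin hreach (ord (t, ω t j)) (by simp))
      rw [hedge, ← edge_fst, hedge] at this
      exact this.symm
    exact (count_mono t).reflect_lt (by rw [hcount, hcount]; exact hj)

end Bidding

theorem sigma_bijection_general (k n : ℕ) [NeZero k] (hn : 0 < n) (p : Fin k → ℕ) :
    Set.BijOn sigmaMap
      {P : (Fin k × Fin n ≃ Fin (k * n)) × (Fin n → Finset (Fin k)) |
        ValidPrebidding hn P ∧ InM p P.2}
      {B : (Fin k → Equiv.Perm (Fin n)) × (Fin n → Finset (Fin k)) |
        ValidBidding hn p B} ∧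
    Nat.card {P : (Fin k × Fin n ≃ Fin (k * n)) × (Fin n → Finset (Fin k)) //
        ValidPrebidding hn P ∧ InM p P.2} =
    Nat.card {B : (Fin k → Equiv.Perm (Fin n)) × (Fin n → Finset (Fin k)) //
        ValidBidding hn p B} := by
  have : NeZero n := NeZero.of_pos hn
  refine (fun hbij => ⟨hbij, Nat.card_congr hbij.equiv⟩)
    ⟨fun P hP => hP.1.validBidding_sigmaMap hP.2, ?_, fun B hB => ?_⟩
  · rintro ⟨o₁, R⟩ h₁ ⟨o₂, R'⟩ h₂ heq
    obtain ⟨hω, rfl : R = R'⟩ := Prod.ext_iff.1 heq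
    rw [h₁.1.eq_of_rowPerm_eq h₂.1 (congrFun hω)]
  · obtain ⟨ord, hv, hσ⟩ := ValidBidding.exists_validPrebidding hB
    exact ⟨(ord, B.2), ⟨hv, hB.1⟩, hσ⟩

theorem sigma_bijection (k n : ℕ) [NeZero k] (hk : 2 ≤ k) (hn : 0 < n) (p : Fin k → ℕ)
    (hp : ∀ t, 0 < p t) :
    Set.BijOn sigmaMap
      {P : (Fin k × Fin n ≃ Fin (k * n)) × (Fin n → Finset (Fin k)) |
        ValidPrebidding hn P ∧ InM p P.2}
      {B : (Fin k → Equiv.Perm (Fin n)) × (Fin n → Finset (Fin k)) |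
        ValidBidding hn p B} ∧
    Nat.card {P : (Fin k × Fin n ≃ Fin (k * n)) × (Fin n → Finset (Fin k)) //
        ValidPrebidding hn P ∧ InM p P.2} =
    Nat.card {B : (Fin k → Equiv.Perm (Fin n)) × (Fin n → Finset (Fin k)) //
        ValidBidding hn p B} :=
  sigma_bijection_general k n hn p
end

section
/- For all integers n ≥ 1 and p ≥ 1, the number of pairs (π,φ) where π is a permutation of [n] and φ is a surjective map from [n] to [p] such that φ(a) = φ(b) whenever a and b lie in the same cycle of π, equals n! · binom(n−1, p−1). -/
open Finset

/-!
A pair `(π, φ)` is a surjective colouring `φ` together with a permutation preserving every colour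
class, so the count is `W(α, p) = ∑_φ ∏ᵢ |φ⁻¹(i)|!` over surjective `φ : α → [p]`. Splitting off
the class `s` of the last colour gives `W(α, p + 1) = ∑_{s ≠ ∅} |s|! · W(α \ s, p)`. By induction
`W(m, p) = m! · C(m - 1, p - 1)`, the factors `C(n, k) · k! · (n - k)!` collapse to `n!`, and the
remaining sum of binomial coefficients is the hockey-stick identity.
-/

open Function Equiv Nat

theorem sum_range_choose_eq_choose_add_one (n p : ℕ) :
    ∑ j ∈ range n, j.choose p = n.choose (p + 1) := by
  induction n with
  | zero => simp
  | succ n ih => rw [sum_range_succ, ih, choose_succ_succ', add_comm]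

theorem Equiv.Perm.forall_sameCycle_eq_iff_comp_eq {α β : Type*} [Finite α] (π : Perm α)
    (f : α → β) : (∀ a b, π.SameCycle a b → f a = f b) ↔ f ∘ π = f := by
  refine ⟨fun h => funext fun a => (h a (π a) (sameCycle_apply_right.2 .rfl)).symm, ?_⟩
  rintro h a b hab
  obtain ⟨k, rfl⟩ := hab.exists_nat_pow_eq
  rw [Perm.coe_pow]
  exact (congrFun (iterate_invariant h k) a).symm

theorem sum_Icc_choose_mul_factorial_mul_choose (n p : ℕ) :
    ∑ k ∈ Icc 1 n, (n + 1).choose k * (k ! * ((n + 1 - k)! * (n - k).choose p)) =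
      (n + 1)! * n.choose (p + 1) := by
  have hterm (k : ℕ) (hk : k ∈ Icc 1 n) :
      (n + 1).choose k * (k ! * ((n + 1 - k)! * (n - k).choose p)) =
        (n + 1)! * (n - 1 - (k - 1)).choose p := by
    have hk := mem_Icc.1 hk
    rw [← mul_assoc, ← mul_assoc, choose_mul_factorial_mul_factorial (by omega),
      show n - 1 - (k - 1) = n - k by omega]
  rw [sum_congr rfl hterm, ← mul_sum, ← Ico_add_one_right_eq_Icc, sum_Ico_eq_sum_range,
    add_tsub_cancel_right]
  simp only [add_tsub_cancel_left]
  rw [sum_range_reflect (fun j => j.choose p), sum_range_choose_eq_choose_add_one]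

section FiberFactorialSum

variable (α : Type*) [Fintype α] [DecidableEq α]

def fiberFactorialSum (p : ℕ) : ℕ :=
  ∑ f : α → Fin p with Surjective f, ∏ i, (Fintype.card {a // f a = i})!

variable {α}

theorem card_surjective_comp_eq_self (p : ℕ) :
    Nat.card {x : Perm α × (α → Fin p) // Surjective x.2 ∧ x.2 ∘ x.1 = x.2} =
      fiberFactorialSum α p := by
  let e : {x : Perm α × (α → Fin p) // Surjective x.2 ∧ x.2 ∘ x.1 = x.2} ≃
      Σ f : {f : α → Fin p // Surjective f}, {π : Perm α // f.1 ∘ π = f.1} :=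
    { toFun x := ⟨⟨x.1.2, x.2.1⟩, x.1.1, x.2.2⟩
      invFun y := ⟨(y.2.1, y.1.1), y.1.2, y.2.2⟩ }
  rw [Nat.card_congr e, Nat.card_eq_fintype_card, Fintype.card_sigma, fiberFactorialSum,
    sum_subtype _ fun f => mem_filter_univ f]
  exact Fintype.sum_congr _ _ fun f => DomMulAct.stabilizer_card f.1

theorem fiberFactorialSum_of_isEmpty [IsEmpty α] (p : ℕ) : fiberFactorialSum α (p + 1) = 0 := by
  rw [fiberFactorialSum, filter_false_of_mem, sum_empty]
  exact fun f _ hf => isEmptyElim (hf 0).choose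

theorem fiberFactorialSum_one [Nonempty α] : fiberFactorialSum α 1 = (Fintype.card α)! := by
  have hsurj (f : α → Fin 1) : Surjective f :=
    fun _ => ⟨Classical.arbitrary α, Subsingleton.elim _ _⟩
  rw [fiberFactorialSum, filter_true_of_mem fun f _ => hsurj f, Fintype.sum_unique,
    Fin.prod_univ_one]
  exact congrArg _ (Fintype.card_congr (subtypeUnivEquiv fun _ => Subsingleton.elim _ _))

section ExtendByLast

variable {p : ℕ}

def extendByLast (s : Finset α) (g : ↥sᶜ → Fin p) (a : α) : Fin (p + 1) :=
  if h : a ∈ s then Fin.last p else (g ⟨a, mem_compl.2 h⟩).castSucc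

theorem extendByLast_eq_last_iff {s : Finset α} {g : ↥sᶜ → Fin p} {a : α} :
    extendByLast s g a = Fin.last p ↔ a ∈ s := by
  unfold extendByLast
  split_ifs with h
  · simpa using h
  · simp [h, (Fin.castSucc_lt_last _).ne]

theorem extendByLast_coe {s : Finset α} {g : ↥sᶜ → Fin p} {x : ↥sᶜ} :
    extendByLast s g x = Fin.castSucc (g x) := by
  simp [extendByLast, mem_compl.1 x.2]

theorem bijective_extendByLast :
    Bijective fun x : Σ s : Finset α, (↥sᶜ → Fin p) => extendByLast x.1 x.2 := by
  constructor
  · rintro ⟨s, g⟩ ⟨s', g'⟩ (h : extendByLast s g = extendByLast s' g')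
    obtain rfl : s = s' := by
      ext a
      rw [← extendByLast_eq_last_iff (g := g), ← extendByLast_eq_last_iff (g := g'), h]
    refine Sigma.ext rfl (heq_of_eq (funext fun x => Fin.castSucc_injective _ ?_))
    rw [← extendByLast_coe, ← extendByLast_coe]
    exact congrFun h x
  · intro f
    set s : Finset α := {a | f a = Fin.last p}
    have hf : ∀ x : ↥sᶜ, f x ≠ Fin.last p := fun x => by simpa [s] using x.2
    refine ⟨⟨s, fun x => (f x).castPred (hf x)⟩, funext fun a => ?_⟩
    by_cases ha : f a = Fin.last p <;> simp [extendByLast, s, ha]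

theorem surjective_extendByLast_iff {s : Finset α} {g : ↥sᶜ → Fin p} :
    Surjective (extendByLast s g) ↔ s.Nonempty ∧ Surjective g := by
  refine ⟨fun h => ⟨?_, fun i => ?_⟩, fun ⟨⟨a, ha⟩, hg⟩ i => ?_⟩
  · obtain ⟨a, ha⟩ := h (Fin.last p)
    exact ⟨a, extendByLast_eq_last_iff.1 ha⟩
  · obtain ⟨a, ha⟩ := h i.castSucc
    have has : a ∉ s := fun has => by
      rw [extendByLast_eq_last_iff.2 has] at ha
      exact (Fin.castSucc_lt_last i).ne' ha
    refine ⟨⟨a, mem_compl.2 has⟩, Fin.castSucc_injective _ ?_⟩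
    rw [← extendByLast_coe, ha]
  · induction i using Fin.lastCases with
    | last => exact ⟨a, extendByLast_eq_last_iff.2 ha⟩
    | cast i =>
      obtain ⟨x, rfl⟩ := hg i
      exact ⟨x, extendByLast_coe⟩

theorem card_extendByLast_eq_last (s : Finset α) (g : ↥sᶜ → Fin p) :
    Fintype.card {a // extendByLast s g a = Fin.last p} = #s := by
  simp only [extendByLast_eq_last_iff, Fintype.card_coe]

theorem card_extendByLast_eq_castSucc (s : Finset α) (g : ↥sᶜ → Fin p) (i : Fin p) :
    Fintype.card {a // extendByLast s g a = i.castSucc} = Fintype.card {x // g x = i} := by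
  refine Fintype.card_congr
    ⟨fun a => ⟨⟨a, mem_compl.2 fun has => ?_⟩, ?_⟩, fun x => ⟨x.1, ?_⟩, fun _ => rfl, fun _ => rfl⟩
  · simpa [extendByLast_eq_last_iff.2 has, (Fin.castSucc_lt_last _).ne'] using a.2
  · exact Fin.castSucc_injective _ (extendByLast_coe.symm.trans a.2)
  · exact extendByLast_coe.trans (congrArg _ x.2)

theorem fiberFactorialSum_succ :
    fiberFactorialSum α (p + 1) =
      ∑ s : Finset α with s.Nonempty, (#s)! * fiberFactorialSum (↥sᶜ) p := by
  simp only [fiberFactorialSum, sum_filter, ← bijective_extendByLast.sum_comp, Fintype.sum_sigma]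
  refine Fintype.sum_congr _ _ fun s => ?_
  by_cases hs : s.Nonempty
  · simp [surjective_extendByLast_iff, hs, mul_sum, Fin.prod_univ_castSucc,
      card_extendByLast_eq_last, card_extendByLast_eq_castSucc, mul_comm]
  · simp [surjective_extendByLast_iff, hs]

end ExtendByLast

theorem fiberFactorialSum_eq {n : ℕ} (hα : Fintype.card α = n + 1) (p : ℕ) :
    fiberFactorialSum α (p + 1) = (n + 1)! * n.choose p := by
  induction p generalizing α n with
  | zero =>
    have : Nonempty α := Fintype.card_pos_iff.1 (hα ▸ succ_pos n)
    rw [fiberFactorialSum_one, hα, choose_zero_right, mul_one]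
  | succ p ih =>
    -- `F k` is the contribution of a last colour class of size `k`
    let F k := if k ∈ Icc 1 n then k ! * ((n + 1 - k)! * (n - k).choose p) else 0
    have hterm (s : Finset α) :
        (if s.Nonempty then (#s)! * fiberFactorialSum (↥sᶜ) (p + 1) else 0) = F #s := by
      have hcard : Fintype.card ↥sᶜ + #s = n + 1 := by
        rw [Fintype.card_coe, card_compl, hα]
        have := hα ▸ card_le_univ s
        omega
      rcases s.eq_empty_or_nonempty with rfl | hs
      · simp [F]
      by_cases hsn : #s ≤ n
      · rw [if_pos hs, ih (n := n - #s) (by omega), show n - #s + 1 = n + 1 - #s by omega]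
        exact (if_pos (mem_Icc.2 ⟨card_pos.2 hs, hsn⟩)).symm
      · have : IsEmpty ↥sᶜ := Fintype.card_eq_zero_iff.1 (by omega)
        rw [if_pos hs, fiberFactorialSum_of_isEmpty, mul_zero]
        exact (if_neg fun h => hsn (mem_Icc.1 h).2).symm
    calc fiberFactorialSum α (p + 2) = ∑ s : Finset α, F #s := by
          rw [fiberFactorialSum_succ, sum_filter]
          exact sum_congr rfl fun s _ => hterm s
      _ = ∑ k ∈ range (n + 2), (n + 1).choose k • F k := by
          rw [← powerset_univ, sum_powerset_apply_card, Finset.card_univ, hα]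
      _ = ∑ k ∈ Icc 1 n, (n + 1).choose k * (k ! * ((n + 1 - k)! * (n - k).choose p)) := by
          simp only [F, smul_eq_mul, mul_ite, mul_zero]
          rw [sum_ite_mem, inter_eq_right.2 fun k hk => mem_range.2 (by grind)]
      _ = (n + 1)! * n.choose (p + 1) := sum_Icc_choose_mul_factorial_mul_choose n p

end FiberFactorialSum

theorem count_colored_perms (n p : ℕ) (hn : 0 < n) (hp : 0 < p) :
    Nat.card {x : Equiv.Perm (Fin n) × (Fin n → Fin p) //
        Function.Surjective x.2 ∧ ∀ a b, x.1.SameCycle a b → x.2 a = x.2 b} =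
    n.factorial * (n - 1).choose (p - 1) := by
  obtain ⟨n, rfl⟩ := exists_eq_add_one_of_ne_zero hn.ne'
  obtain ⟨p, rfl⟩ := exists_eq_add_one_of_ne_zero hp.ne'
  simp_rw [Perm.forall_sameCycle_eq_iff_comp_eq]
  rw [card_surjective_comp_eq_self, fiberFactorialSum_eq (Fintype.card_fin _),
    add_tsub_cancel_right, add_tsub_cancel_right]
end
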